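/- arXiv:math/9906140 — 2 statements merged into one kernel-verified Lean document; each statement's English description precedes it below -/
import Mathlib

section
/- Let a, b, u : ℝ → ℝ with a, b differentiable, and suppose a'(x) = u(x)·b(x), b(x) = 2·u(x), and b'(x) = −u(x)·a(x) for all x ∈ ℝ, and suppose there exist x₀ ∈ ℝ and μ ∈ ℝ with a(x₀)² + b(x₀)² = 4μ². Then a satisfies the Riccati equation a'(x) + a(x)²/2 = 2μ² for all x ∈ ℝ. -/
/-! The system `a' = u b`, `b' = -u a` is an infinitesimal rotation of `(a, b)`, so `a² + b²`
is a first integral, equal to `4μ²` everywhere. Substituting `u = b / 2` gives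
`a' = b² / 2 = (4μ² - a²) / 2`. -/

theorem sq_add_sq_eq_of_deriv_eq_rotation {a b u : ℝ → ℝ}
    (ha : Differentiable ℝ a) (hb : Differentiable ℝ b)
    (ha' : ∀ x, deriv a x = u x * b x) (hb' : ∀ x, deriv b x = -(u x * a x)) (x y : ℝ) :
    a x ^ 2 + b x ^ 2 = a y ^ 2 + b y ^ 2 := by
  have hdiff : Differentiable ℝ (fun x => a x ^ 2 + b x ^ 2) := (ha.pow 2).add (hb.pow 2)
  have hderiv : ∀ x, deriv (fun x => a x ^ 2 + b x ^ 2) x = 0 := fun x => by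
    rw [(((ha x).hasDerivAt.fun_pow 2).fun_add ((hb x).hasDerivAt.fun_pow 2)).deriv, ha' x, hb' x]
    ring
  exact is_const_of_deriv_eq_zero hdiff hderiv x y

/-- If differentiable `a, b` satisfy `a' = u·b`, `b = 2·u`, `b' = −u·a` and
`a(x₀)² + b(x₀)² = 4μ²` for some `x₀, μ`, then `a` satisfies the Riccati equation
`a' + a²/2 = 2μ²` everywhere. -/
theorem bargmann_system_gives_riccati
    (a b u : ℝ → ℝ) (ha : Differentiable ℝ a) (hb : Differentiable ℝ b)
    (h1 : ∀ x : ℝ, deriv a x = u x * b x)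
    (h2 : ∀ x : ℝ, b x = 2 * u x)
    (h3 : ∀ x : ℝ, deriv b x = -(u x * a x))
    (x₀ μ : ℝ) (h0 : a x₀ ^ 2 + b x₀ ^ 2 = 4 * μ ^ 2) :
    ∀ x : ℝ, deriv a x + a x ^ 2 / 2 = 2 * μ ^ 2 := by
  intro x
  have hconst : a x ^ 2 + b x ^ 2 = 4 * μ ^ 2 :=
    (sq_add_sq_eq_of_deriv_eq_rotation ha hb h1 h3 x x₀).trans h0
  have hderiv : deriv a x = b x ^ 2 / 2 := by
    rw [h1 x, h2 x]
    ring
  linarith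
end

section
/- Let μ, φ₀ ∈ ℝ and λ ∈ ℂ with 2iλ ≠ μ. Then the spinor field on the surface of revolution defined by ψ(x,y) := exp(λy)·exp(−iλx)·(2iλ + μ·tanh(μx − φ₀))/(2iλ − μ) and φ(x,y) := μ·exp(λy)·exp(−iλx)·sech(μx − φ₀)/(2iλ − μ) satisfies the two-dimensional Dirac equation ∂ψ = p·φ and ∂̄φ = −p·ψ with the real-valued potential p(x,y) := (μ/2)·sech(μx − φ₀). -/
/-!
Write `E(x, y) = exp(λy) · exp(−iλx)`. Since `∂ₓE = −iλE` and `∂_yE = λE`, the plane wave is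
annihilated by `∂` and satisfies `∂̄E = −iλE`, so on a separated field `E · f(x)` the Dirac
operators reduce to ordinary derivatives of the profile: `∂(E f) = E f'/2` and
`∂̄(E f) = E (f' − 2iλ f)/2`. The Dirac system for `ψ = E u`, `φ = E v` becomes
`u' = 2p v` and `v' − 2iλ v = −2p u`, which for `u = 2iλ + μ tanh`, `v = μ sech` are the
identities `tanh' = sech²` and `sech' = −tanh · sech`.
-/

open Complex

namespace Real

theorem hasDerivAt_tanh (t : ℝ) : HasDerivAt tanh (1 / cosh t ^ 2) t := by
  have hc : cosh t ≠ 0 := (cosh_pos t).ne'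
  have h := (hasDerivAt_sinh t).div (hasDerivAt_cosh t) hc
  rw [show sinh / cosh = tanh from funext fun s => (tanh_eq_sinh_div_cosh s).symm] at h
  refine h.congr_deriv ?_
  rw [← cosh_sq_sub_sinh_sq t]
  ring

theorem hasDerivAt_inv_cosh (t : ℝ) :
    HasDerivAt (fun s => 1 / cosh s) (-(tanh t * (1 / cosh t))) t := by
  have hc : cosh t ≠ 0 := (cosh_pos t).ne'
  refine ((hasDerivAt_const t (1 : ℝ)).div (hasDerivAt_cosh t) hc).congr_deriv ?_
  rw [tanh_eq_sinh_div_cosh]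
  field_simp
  ring

end Real

noncomputable def wirtingerZ (f : ℝ → ℝ → ℂ) (x y : ℝ) : ℂ :=
  (1 / 2 : ℂ) * (deriv (fun x' : ℝ => f x' y) x + I * deriv (fun y' : ℝ => f x y') y)

noncomputable def wirtingerZBar (f : ℝ → ℝ → ℂ) (x y : ℝ) : ℂ :=
  (1 / 2 : ℂ) * (deriv (fun x' : ℝ => f x' y) x - I * deriv (fun y' : ℝ => f x y') y)

noncomputable def planeWave (l : ℂ) (x y : ℝ) : ℂ :=
  exp (l * y) * exp (-(I * l * x))

section PlaneWave

variable (l : ℂ) (x y : ℝ)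

theorem hasDerivAt_planeWave_fst :
    HasDerivAt (fun x' : ℝ => planeWave l x' y) (-(I * l) * planeWave l x y) x := by
  have h : HasDerivAt (fun z : ℂ => -(I * l * z)) (-(I * l)) x := by
    simpa using ((hasDerivAt_id (x : ℂ)).const_mul (I * l)).fun_neg
  refine (h.cexp.comp_ofReal.const_mul (exp (l * y))).congr_deriv ?_
  simp only [planeWave]
  ring

theorem hasDerivAt_planeWave_snd :
    HasDerivAt (fun y' : ℝ => planeWave l x y') (l * planeWave l x y) y := by
  have h : HasDerivAt (fun z : ℂ => l * z) l y := by
    simpa using (hasDerivAt_id (y : ℂ)).const_mul l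
  refine (h.cexp.comp_ofReal.mul_const (exp (-(I * l * x)))).congr_deriv ?_
  simp only [planeWave]
  ring

variable {l x y} {f : ℝ → ℂ} {f' : ℂ}

theorem wirtingerZ_planeWave_mul (hf : HasDerivAt f f' x) :
    wirtingerZ (fun x y => planeWave l x y * f x) x y = planeWave l x y * f' / 2 := by
  rw [wirtingerZ, ((hasDerivAt_planeWave_fst l x y).fun_mul hf).deriv,
    ((hasDerivAt_planeWave_snd l x y).mul_const (f x)).deriv]
  ring

theorem wirtingerZBar_planeWave_mul (hf : HasDerivAt f f' x) :
    wirtingerZBar (fun x y => planeWave l x y * f x) x y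
      = planeWave l x y * (f' - 2 * I * l * f x) / 2 := by
  rw [wirtingerZBar, ((hasDerivAt_planeWave_fst l x y).fun_mul hf).deriv,
    ((hasDerivAt_planeWave_snd l x y).mul_const (f x)).deriv]
  ring

end PlaneWave

theorem static_one_soliton_spinor_field_solves_dirac_general
    (μ φ₀ : ℝ) (l : ℂ) :
    let ψ : ℝ → ℝ → ℂ := fun x y => Complex.exp (l * (y : ℂ)) * Complex.exp (-(Complex.I * l * (x : ℂ)))
      * (2 * Complex.I * l + (μ : ℂ) * (Real.tanh (μ * x - φ₀) : ℂ)) / (2 * Complex.I * l - (μ : ℂ))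
    let φ : ℝ → ℝ → ℂ := fun x y => (μ : ℂ) * Complex.exp (l * (y : ℂ))
      * Complex.exp (-(Complex.I * l * (x : ℂ)))
      * ((1 / Real.cosh (μ * x - φ₀) : ℝ) : ℂ) / (2 * Complex.I * l - (μ : ℂ))
    ∀ x y : ℝ,
      ((1 / 2 : ℂ) * (deriv (fun x' : ℝ => ψ x' y) x + Complex.I * deriv (fun y' : ℝ => ψ x y') y)
        = ((μ / 2 * (1 / Real.cosh (μ * x - φ₀)) : ℝ) : ℂ) * φ x y)
      ∧ ((1 / 2 : ℂ) * (deriv (fun x' : ℝ => φ x' y) x - Complex.I * deriv (fun y' : ℝ => φ x y') y)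
        = -(((μ / 2 * (1 / Real.cosh (μ * x - φ₀)) : ℝ) : ℂ) * ψ x y)) := by
  intro ψ φ x y
  set D := 2 * I * l - (μ : ℂ)
  have hlin : HasDerivAt (fun x' : ℝ => μ * x' - φ₀) μ x := by
    simpa using ((hasDerivAt_id x).const_mul μ).sub_const φ₀
  have hu : HasDerivAt (fun x' : ℝ => (2 * I * l + μ * (Real.tanh (μ * x' - φ₀) : ℂ)) / D)
      (μ * ((1 / Real.cosh (μ * x - φ₀) ^ 2 * μ : ℝ) : ℂ) / D) x :=
    ((((Real.hasDerivAt_tanh _).comp x hlin).ofReal_comp.const_mul _).const_add _).div_const D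
  have hv : HasDerivAt (fun x' : ℝ => μ * ((1 / Real.cosh (μ * x' - φ₀) : ℝ) : ℂ) / D)
      (μ * ((-(Real.tanh (μ * x - φ₀) * (1 / Real.cosh (μ * x - φ₀))) * μ : ℝ) : ℂ) / D) x :=
    (((Real.hasDerivAt_inv_cosh _).comp x hlin).ofReal_comp.const_mul _).div_const D
  have hψ : ψ = fun x y =>
      planeWave l x y * ((2 * I * l + μ * (Real.tanh (μ * x - φ₀) : ℂ)) / D) := by
    funext x y
    simp only [ψ, planeWave, D]
    ring
  have hφ : φ = fun x y => planeWave l x y * (μ * ((1 / Real.cosh (μ * x - φ₀) : ℝ) : ℂ) / D) := by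
    funext x y
    simp only [φ, planeWave, D]
    ring
  change wirtingerZ ψ x y = _ ∧ wirtingerZBar φ x y = _
  rw [hψ, hφ, wirtingerZ_planeWave_mul hu, wirtingerZBar_planeWave_mul hv]
  constructor <;> (push_cast; ring)

/-- For `μ, φ₀ ∈ ℝ`, `λ ∈ ℂ` with `2iλ ≠ μ`, the static one-soliton spinor field
`ψ(x,y) = exp(λy)·exp(−iλx)·(2iλ + μ·tanh(μx − φ₀))/(2iλ − μ)`,
`φ(x,y) = μ·exp(λy)·exp(−iλx)·sech(μx − φ₀)/(2iλ − μ)` satisfies the two-dimensional Dirac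
equation `∂ψ = p·φ`, `∂̄φ = −p·ψ` with real potential `p(x,y) = (μ/2)·sech(μx − φ₀)`, where
`∂f := (1/2)(∂f/∂x + i·∂f/∂y)` and `∂̄f := (1/2)(∂f/∂x − i·∂f/∂y)`. -/
theorem static_one_soliton_spinor_field_solves_dirac
    (μ φ₀ : ℝ) (l : ℂ) (h : 2 * Complex.I * l ≠ (μ : ℂ)) :
    let ψ : ℝ → ℝ → ℂ := fun x y => Complex.exp (l * (y : ℂ)) * Complex.exp (-(Complex.I * l * (x : ℂ)))
      * (2 * Complex.I * l + (μ : ℂ) * (Real.tanh (μ * x - φ₀) : ℂ)) / (2 * Complex.I * l - (μ : ℂ))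
    let φ : ℝ → ℝ → ℂ := fun x y => (μ : ℂ) * Complex.exp (l * (y : ℂ))
      * Complex.exp (-(Complex.I * l * (x : ℂ)))
      * ((1 / Real.cosh (μ * x - φ₀) : ℝ) : ℂ) / (2 * Complex.I * l - (μ : ℂ))
    ∀ x y : ℝ,
      ((1 / 2 : ℂ) * (deriv (fun x' : ℝ => ψ x' y) x + Complex.I * deriv (fun y' : ℝ => ψ x y') y)
        = ((μ / 2 * (1 / Real.cosh (μ * x - φ₀)) : ℝ) : ℂ) * φ x y)
      ∧ ((1 / 2 : ℂ) * (deriv (fun x' : ℝ => φ x' y) x - Complex.I * deriv (fun y' : ℝ => φ x y') y)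
        = -(((μ / 2 * (1 / Real.cosh (μ * x - φ₀)) : ℝ) : ℂ) * ψ x y)) :=
  static_one_soliton_spinor_field_solves_dirac_general μ φ₀ l
end
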